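/- arXiv:2604.03638 — 4 statements merged into one kernel-verified Lean document; each statement's English description precedes it below -/
import Mathlib

section
/- Let d ≥ 1 and let f : ℝ^d → ℝ be measurable with ∫_{ℝ^d} |f(y)| (1+|y|)^{-d} dy < ∞. Then for all x ∈ ℝ^d and t > 0, ∫_{ℝ^d} |f(y)| (t² + |x-y|²)^{-d/2} dy ≤ C ( (1+|x|)^d / t^d + 1 / min{1, t^d} ) ∫_{ℝ^d} |f(y)| (1+|y|)^{-d} dy, for a constant C depending only on d. -/
open MeasureTheory Real Set

set_option maxHeartbeats 1000000 in
lemma key_ineq (d : ℕ) (a b c t : ℝ) (ha : 0 ≤ a) (hb : 0 ≤ b) (hc : 0 ≤ c)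
    (hcb : b ≤ a + c) (ht : 0 < t) :
    (t^2 + c^2) ^ (-(d:ℝ)/2) ≤
      3^d * ((1+a)^d / t^d + 1 / min 1 (t^d)) * (1+b) ^ (-(d:ℝ)) := by
  set A := (1+a)^d / t^d + 1 / min 1 (t^d) with hA
  set m := min 1 t with hm
  have hm0 : 0 < m := lt_min one_pos ht
  have hm1 : m ≤ 1 := min_le_left _ _
  have hmt : m ≤ t := min_le_right _ _
  have hmin : min 1 (t^d) = m^d := by
    rcases le_total t 1 with h | h
    · rw [min_eq_right (pow_le_one₀ ht.le h), hm, min_eq_right h]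
    · rw [min_eq_left (one_le_pow₀ h), hm, min_eq_left h, one_pow]
  have hs2 : 0 < t^2 + c^2 := by positivity
  set s := Real.sqrt (t^2 + c^2) with hsdef
  have hs0 : 0 < s := Real.sqrt_pos.mpr hs2
  have hssq : s^2 = t^2 + c^2 := Real.sq_sqrt hs2.le
  have h1 : (t^2 + c^2) ^ (-(d:ℝ)/2) = (s^d)⁻¹ := by
    rw [← hssq, ← Real.rpow_natCast s 2, ← Real.rpow_mul hs0.le,
      show ((2:ℕ):ℝ) * (-(d:ℝ)/2) = -(d:ℝ) by push_cast; ring,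
      Real.rpow_neg hs0.le, Real.rpow_natCast]
  have hb1 : (0:ℝ) < 1 + b := by linarith
  have h2 : (1+b) ^ (-(d:ℝ)) = ((1+b)^d)⁻¹ := by
    rw [Real.rpow_neg hb1.le, Real.rpow_natCast]
  have hsd : (0:ℝ) < s^d := by positivity
  have hbd : (0:ℝ) < (1+b)^d := by positivity
  have htd : (0:ℝ) < t^d := by positivity
  have hmd : (0:ℝ) < m^d := by positivity
  have hA1 : (1+a)^d / t^d ≤ A := by
    rw [hA, hmin]
    have : (0:ℝ) ≤ 1 / m^d := by positivity
    linarith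
  have hA2 : 1 / m^d ≤ A := by
    rw [hA, hmin]
    have : (0:ℝ) ≤ (1+a)^d / t^d := by positivity
    linarith
  clear_value A m s
  have main : (1+b)^d ≤ 3^d * A * s^d := by
    rcases le_or_gt b (2*a) with hcase | hcase
    · -- near region
      have hts : t ≤ s := by
        refine le_of_pow_le_pow_left₀ (n := 2) two_ne_zero hs0.le ?_
        nlinarith [sq_nonneg c]
      have htsd : t^d ≤ s^d := pow_le_pow_left₀ ht.le hts d
      have h3 : (1+b)^d ≤ (3*(1+a))^d :=
        pow_le_pow_left₀ (by linarith) (by linarith) d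
      have h4 : (3*(1+a))^d = 3^d * (1+a)^d := mul_pow 3 (1+a) d
      have h5 : (1+a)^d = (1+a)^d / t^d * t^d := (div_mul_cancel₀ _ htd.ne').symm
      have hA0 : (0:ℝ) ≤ A := le_trans (by positivity) hA1
      have h6 : (1+a)^d / t^d * t^d ≤ A * s^d :=
        mul_le_mul hA1 htsd htd.le hA0
      calc (1+b)^d ≤ 3^d * (1+a)^d := by rw [← h4]; exact h3
        _ = 3^d * ((1+a)^d / t^d * t^d) := by rw [← h5]
        _ ≤ 3^d * (A * s^d) := by
            have : (0:ℝ) ≤ 3^d := by positivity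
            exact mul_le_mul_of_nonneg_left h6 this
        _ = 3^d * A * s^d := by ring
    · -- far region
      have hcb2 : b/2 ≤ c := by linarith
      have hc2 : b^2/4 ≤ c^2 := by nlinarith
      have hm2t : m^2 ≤ t^2 := by nlinarith
      have hm21 : m^2 ≤ 1 := by nlinarith
      have hmb2 : m^2*b^2 ≤ b^2 := by
        have := mul_le_mul_of_nonneg_right hm21 (sq_nonneg b)
        linarith
      have hcross : 2*(m^2*b) ≤ m^2 + m^2*b^2 := by nlinarith [sq_nonneg (m - m*b)]
      have hsq : (m*(1+b)/3)^2 ≤ s^2 := by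
        rw [hssq]
        nlinarith [hmb2, hcross, hm2t, hc2]
      have hms : m*(1+b)/3 ≤ s :=
        le_of_pow_le_pow_left₀ two_ne_zero hs0.le hsq
      have h7 : 1 + b ≤ 3*s/m := by
        rw [le_div_iff₀ hm0]
        nlinarith
      have h8 : (1+b)^d ≤ (3*s/m)^d := pow_le_pow_left₀ hb1.le h7 d
      have h9 : (3*s/m)^d = 3^d * s^d / m^d := by
        rw [div_pow, mul_pow]
      have h10 : 3^d * s^d / m^d = 3^d * (1/m^d) * s^d := by ring
      calc (1+b)^d ≤ 3^d * (1/m^d) * s^d := by rw [← h10, ← h9]; exact h8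
        _ ≤ 3^d * A * s^d := by
            apply mul_le_mul_of_nonneg_right _ hsd.le
            exact mul_le_mul_of_nonneg_left hA2 (by positivity)
  rw [h1, h2, inv_eq_one_div, inv_eq_one_div, mul_div_assoc', mul_one,
    div_le_div_iff₀ hsd hbd, one_mul]
  exact main

theorem stmt1 (d : ℕ) (hd : 1 ≤ d) :
    ∃ C > 0, ∀ (f : EuclideanSpace ℝ (Fin d) → ℝ), Measurable f →
      Integrable (fun y => |f y| * (1 + ‖y‖) ^ (-(d:ℝ))) →
      ∀ (x : EuclideanSpace ℝ (Fin d)) (t : ℝ), 0 < t →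
      ∫ y, |f y| * (t^2 + ‖x - y‖^2) ^ (-(d:ℝ)/2)
        ≤ C * ((1+‖x‖)^d / t^d + 1 / min 1 (t^d)) *
          ∫ y, |f y| * (1 + ‖y‖) ^ (-(d:ℝ)) := by
  refine ⟨3^d, by positivity, ?_⟩
  intro f hf hint x t ht
  set A := (1+‖x‖)^d / t^d + 1 / min 1 (t^d) with hA
  have hbound : ∀ y : EuclideanSpace ℝ (Fin d),
      |f y| * (t^2 + ‖x - y‖^2) ^ (-(d:ℝ)/2) ≤
        3^d * A * (|f y| * (1 + ‖y‖) ^ (-(d:ℝ))) := by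
    intro y
    have hcb : ‖y‖ ≤ ‖x‖ + ‖x - y‖ := by
      have := norm_sub_norm_le y x
      have h2 : ‖y - x‖ = ‖x - y‖ := norm_sub_rev y x
      linarith
    have hk := key_ineq d ‖x‖ ‖y‖ ‖x - y‖ t (norm_nonneg _) (norm_nonneg _)
      (norm_nonneg _) hcb ht
    calc |f y| * (t^2 + ‖x - y‖^2) ^ (-(d:ℝ)/2)
        ≤ |f y| * (3^d * A * (1 + ‖y‖) ^ (-(d:ℝ))) :=
          mul_le_mul_of_nonneg_left hk (abs_nonneg _)
      _ = 3^d * A * (|f y| * (1 + ‖y‖) ^ (-(d:ℝ))) := by ring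
  have hmono : ∫ y, |f y| * (t^2 + ‖x - y‖^2) ^ (-(d:ℝ)/2)
      ≤ ∫ y, 3^d * A * (|f y| * (1 + ‖y‖) ^ (-(d:ℝ))) := by
    refine integral_mono_of_nonneg ?_ (hint.const_mul _) ?_
    · exact Filter.Eventually.of_forall fun y => by positivity
    · exact Filter.Eventually.of_forall hbound
  calc ∫ y, |f y| * (t^2 + ‖x - y‖^2) ^ (-(d:ℝ)/2)
      ≤ ∫ y, 3^d * A * (|f y| * (1 + ‖y‖) ^ (-(d:ℝ))) := hmono
    _ = 3^d * A * ∫ y, |f y| * (1 + ‖y‖) ^ (-(d:ℝ)) := integral_const_mul _ _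
    _ = 3^d * A * ∫ y, |f y| * (1 + ‖y‖) ^ (-(d:ℝ)) := rfl
end

section
/- Let f : ℤ → ℝ with Σ_{m} |f(m)|/√(1+|m|) < ∞ and n ∈ ℤ. Then lim_{t→0⁺} Σ_{m∈ℤ} f(m) ∫₁^∞ p_u(n-m) (e^{-t²/(4u)} - 1)/u du = 0; more precisely, the absolute value of this sum is bounded by C t² √(1+|n|) Σ_m |f(m)|/√(1+|m|) for t ∈ (0,1). -/
/-!
Since `0 ≤ 1 - e^{-x} ≤ x`, the inner integral for the shift `k` is at most
`(t²/4) ∫₁^∞ p_u(k) u⁻² du`. For `|k| ≤ 1` the trivial bound `p_u ≤ 1` makes this integral at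
most `1`. For `|k| = s + 2` we integrate the power series of `I_{s+2}` term by term against
`e^{-2u} u⁻²` over `(0, ∞)`: the Gamma integrals and `(a + b)! ≤ 2^{a+b} a! b!` bound the `m`-th
term by `2 / ((2m+s+1)(2m+s+2))`, which telescopes to `2 / (s + 1)`. So the inner integral is
`O(t² / √(1 + |k|))`, and Peetre's inequality `1 + |m| ≤ (1 + |n|)(1 + |n - m|)` turns the series
into `t² √(1 + |n|) Σ |f(m)| / √(1 + |m|)`.
-/

open MeasureTheory Real Set

/-- The modified Bessel function of the first kind of integer order, via its power series. -/
noncomputable def besselI (k : ℕ) (z : ℝ) : ℝ :=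
  ∑' m : ℕ, (z/2) ^ (2*m + k) / ((Nat.factorial m : ℝ) * (Nat.factorial (m + k) : ℝ))

/-- The heat kernel of the discrete Laplacian on ℤ: p_u(k) = e^{-2u} I_{|k|}(2u). -/
noncomputable def discHeat (u : ℝ) (k : ℤ) : ℝ := Real.exp (-2*u) * besselI k.natAbs (2*u)

open scoped Nat

lemma factorial_add_le_two_pow_mul (a b : ℕ) : (a + b)! ≤ 2 ^ (a + b) * a ! * b ! := by
  rw [← Nat.add_choose_mul_factorial_mul_factorial a b, mul_assoc, mul_assoc]
  exact Nat.mul_le_mul_right _ (Nat.choose_le_two_pow _ _)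

lemma summable_besselI_series (k : ℕ) (z : ℝ) :
    Summable fun m : ℕ => (z/2) ^ (2*m + k) / ((m ! : ℝ) * ((m + k)! : ℝ)) := by
  refine Summable.of_norm_bounded
    ((summable_pow_div_factorial ((z/2)^2)).mul_right (|z/2|^k)) fun m => ?_
  have hm : (0:ℝ) < m ! := by positivity
  rw [norm_div, norm_pow, norm_mul, Real.norm_natCast, Real.norm_natCast, Real.norm_eq_abs]
  calc |z/2| ^ (2*m + k) / (m ! * (m + k)!)
      ≤ |z/2| ^ (2*m + k) / m ! := by
        gcongr
        exact le_mul_of_one_le_right hm.le (Nat.one_le_cast.mpr (m + k).factorial_pos)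
    _ = ((z/2)^2) ^ m / m ! * |z/2| ^ k := by rw [pow_add, pow_mul, sq_abs]; ring

lemma besselI_nonneg (k : ℕ) {z : ℝ} (hz : 0 ≤ z) : 0 ≤ besselI k z :=
  tsum_nonneg fun m => by positivity

lemma besselI_le_exp (k : ℕ) {z : ℝ} (hz : 0 ≤ z) : besselI k z ≤ exp z := by
  rw [besselI, exp_eq_exp_ℝ, NormedSpace.exp_eq_tsum_div]
  refine (summable_besselI_series k z).tsum_le_tsum_of_inj (fun m => 2*m + k)
    (fun a b h => by simp only at h; omega) (fun _ _ => by positivity) (fun m => ?_)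
    (summable_pow_div_factorial z)
  have h := factorial_add_le_two_pow_mul m (m + k)
  rw [show m + (m + k) = 2*m + k by ring] at h
  rw [div_pow, div_div, div_le_div_iff₀ (by positivity) (by positivity)]
  calc z ^ (2*m + k) * ((2*m + k)! : ℝ)
      ≤ z ^ (2*m + k) * (2 ^ (2*m + k) * m ! * (m + k)!) := by gcongr; exact_mod_cast h
    _ = z ^ (2*m + k) * (2 ^ (2*m + k) * (m ! * (m + k)!)) := by ring

lemma measurable_besselI (k : ℕ) : Measurable (besselI k) :=
  measurable_of_tendsto_metrizable (fun N => by fun_prop)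
    (tendsto_pi_nhds.2 fun z => (summable_besselI_series k z).hasSum.tendsto_sum_nat)

lemma discHeat_nonneg {u : ℝ} (hu : 0 ≤ u) (k : ℤ) : 0 ≤ discHeat u k :=
  mul_nonneg (exp_nonneg _) (besselI_nonneg _ (by positivity))

lemma discHeat_le_one {u : ℝ} (hu : 0 ≤ u) (k : ℤ) : discHeat u k ≤ 1 :=
  calc discHeat u k ≤ exp (-2*u) * exp (2*u) :=
        mul_le_mul_of_nonneg_left (besselI_le_exp _ (by positivity)) (exp_nonneg _)
    _ = 1 := by rw [← exp_add]; simp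

lemma measurable_discHeat (k : ℤ) : Measurable fun u => discHeat u k := by
  have := measurable_besselI k.natAbs
  unfold discHeat
  fun_prop

lemma discHeat_div_sq_eq_tsum {k : ℤ} {s : ℕ} (hk : k.natAbs = s + 2) {u : ℝ} (hu : u ≠ 0) :
    discHeat u k / u^2 = ∑' m : ℕ, exp (-2*u) * u ^ (2*m + s) / (m ! * (m + s + 2)! : ℝ) := by
  rw [discHeat, hk, besselI, ← tsum_mul_left, ← tsum_div_const]
  refine tsum_congr fun m => ?_
  rw [show 2*u/2 = u by ring, show 2*m + (s + 2) = 2*m + s + 2 by ring,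
    show m + (s + 2) = m + s + 2 by ring, pow_add]
  field_simp

lemma integrableOn_exp_neg_mul_mul_pow {r : ℝ} (hr : 0 < r) (j : ℕ) :
    IntegrableOn (fun u : ℝ => exp (-r*u) * u ^ j) (Ioi 0) := by
  have hj : (-1 : ℝ) < j := by linarith [j.cast_nonneg (α := ℝ)]
  refine (integrableOn_rpow_mul_exp_neg_mul_rpow (p := 1) hj one_pos hr).congr_fun
    (fun u _ => ?_) measurableSet_Ioi
  simp only [rpow_one, rpow_natCast, mul_comm]

lemma integral_exp_neg_mul_mul_pow {r : ℝ} (hr : 0 < r) (j : ℕ) :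
    ∫ u in Ioi 0, exp (-r*u) * u ^ j = j ! / r ^ (j + 1) :=
  calc ∫ u in Ioi 0, exp (-r*u) * u ^ j
      = ∫ u in Ioi 0, u ^ ((j + 1 : ℝ) - 1) * exp (-(r*u)) :=
        setIntegral_congr_fun measurableSet_Ioi fun u _ => by
          rw [add_sub_cancel_right, rpow_natCast, neg_mul, mul_comm]
    _ = j ! / r ^ (j + 1) := by
        rw [integral_rpow_mul_exp_neg_mul_Ioi (by positivity) hr, Gamma_nat_eq_factorial,
          ← Nat.cast_add_one, rpow_natCast, one_div_pow]
        ring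

lemma integrableOn_one_div_sq_Ioi_one : IntegrableOn (fun u : ℝ => 1 / u^2) (Ioi 1) := by
  refine (integrableOn_Ioi_rpow_of_lt (show (-2:ℝ) < -1 by norm_num) one_pos).congr_fun
    (fun u hu => ?_) measurableSet_Ioi
  dsimp only
  rw [rpow_neg (zero_le_one.trans (le_of_lt hu)), rpow_two, one_div]

lemma integral_one_div_sq_Ioi_one : ∫ u in Ioi (1:ℝ), 1 / u^2 = 1 := by
  have h := integral_Ioi_rpow_of_lt (show (-2:ℝ) < -1 by norm_num) one_pos
  rw [setIntegral_congr_fun measurableSet_Ioi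
    (fun u (hu : 1 < u) => by rw [rpow_neg (by linarith), rpow_two, ← one_div])] at h
  rw [h]; norm_num

lemma integrableOn_discHeat_div_sq (k : ℤ) :
    IntegrableOn (fun u => discHeat u k / u^2) (Ioi 1) := by
  refine integrableOn_one_div_sq_Ioi_one.mono'
    ((measurable_discHeat k).div (measurable_id.pow_const 2)).aestronglyMeasurable
    (ae_restrict_of_forall_mem measurableSet_Ioi fun u (hu : 1 < u) => ?_)
  have hu0 : 0 ≤ u := by linarith
  rw [norm_of_nonneg (by have := discHeat_nonneg hu0 k; positivity)]
  gcongr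
  exact discHeat_le_one hu0 k

lemma integral_discHeat_div_sq_le_one (k : ℤ) : ∫ u in Ioi (1:ℝ), discHeat u k / u^2 ≤ 1 := by
  refine (setIntegral_mono_on (integrableOn_discHeat_div_sq k) integrableOn_one_div_sq_Ioi_one
    measurableSet_Ioi fun u (hu : 1 < u) => ?_).trans integral_one_div_sq_Ioi_one.le
  gcongr
  exact discHeat_le_one (by linarith) k

lemma integral_exp_mul_pow_div_factorial_le (s m : ℕ) :
    ∫ u in Ioi (1:ℝ), exp (-2*u) * u ^ (2*m + s) / (m ! * (m + s + 2)! : ℝ)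
      ≤ 2 / ((2*m + s + 1) * (2*m + s + 2)) := by
  have hmoment :
      ∫ u in Ioi (1:ℝ), exp (-2*u) * u ^ (2*m + s) ≤ (2*m + s)! / 2 ^ (2*m + s + 1) := by
    rw [← integral_exp_neg_mul_mul_pow two_pos]
    exact setIntegral_mono_set (integrableOn_exp_neg_mul_mul_pow two_pos _)
      (ae_restrict_of_forall_mem measurableSet_Ioi fun u (hu : 0 < u) => by positivity)
      (Ioi_subset_Ioi zero_le_one).eventuallyLE
  have hfactorial : ((2*m + s)! : ℝ) * ((2*m + s + 1) * (2*m + s + 2))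
      ≤ 2 * 2 ^ (2*m + s + 1) * (m ! * (m + s + 2)!) := by
    have h := factorial_add_le_two_pow_mul m (m + s + 2)
    rw [show m + (m + s + 2) = 2*m + s + 1 + 1 by ring, Nat.factorial_succ, Nat.factorial_succ] at h
    rw [← pow_succ']
    norm_cast
    linarith
  rw [integral_div, div_le_div_iff₀ (by positivity) (by positivity)]
  calc (∫ u in Ioi (1:ℝ), exp (-2*u) * u ^ (2*m + s)) * ((2*m + s + 1) * (2*m + s + 2))
      ≤ (2*m + s)! / 2 ^ (2*m + s + 1) * ((2*m + s + 1) * (2*m + s + 2)) := by gcongr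
    _ ≤ 2 * (m ! * (m + s + 2)!) := by
        rw [div_mul_eq_mul_div, div_le_iff₀ (by positivity)]; linarith

lemma sum_range_two_div_le (s N : ℕ) :
    ∑ m ∈ Finset.range N, (2:ℝ) / ((2*m + s + 1) * (2*m + s + 2)) ≤ 2 / (s + 1) := by
  set g : ℕ → ℝ := fun m => 2 / (2*m + s + 1)
  have hstep : ∀ m : ℕ, (2:ℝ) / ((2*m + s + 1) * (2*m + s + 2)) ≤ g m - g (m + 1) := by
    intro m
    simp only [g, Nat.cast_add_one]
    rw [div_sub_div _ _ (by positivity) (by positivity),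
      div_le_div_iff₀ (by positivity) (by positivity)]
    ring_nf
    nlinarith [m.cast_nonneg (α := ℝ), s.cast_nonneg (α := ℝ)]
  calc ∑ m ∈ Finset.range N, (2:ℝ) / ((2*m + s + 1) * (2*m + s + 2))
      ≤ ∑ m ∈ Finset.range N, (g m - g (m + 1)) := Finset.sum_le_sum fun m _ => hstep m
    _ = g 0 - g N := Finset.sum_range_sub' g N
    _ ≤ 2 / (s + 1) := by simp only [g]; norm_num; positivity

lemma integral_discHeat_div_sq_le_of_natAbs_eq {k : ℤ} {s : ℕ} (hk : k.natAbs = s + 2) :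
    ∫ u in Ioi (1:ℝ), discHeat u k / u^2 ≤ 2 / (s + 1) := by
  set F : ℕ → ℝ → ℝ := fun m u => exp (-2*u) * u ^ (2*m + s) / (m ! * (m + s + 2)! : ℝ)
  have hF_nonneg : ∀ m, ∀ u ∈ Ioi (1:ℝ), 0 ≤ F m u := fun m u (hu : 1 < u) => by
    have : 0 < u := by linarith
    positivity
  have hF_int : ∀ m, IntegrableOn (F m) (Ioi 1) := fun m =>
    ((integrableOn_exp_neg_mul_mul_pow two_pos _).mono_set (Ioi_subset_Ioi zero_le_one)).div_const _
  have hterm_nonneg : ∀ m, 0 ≤ ∫ u in Ioi 1, F m u := fun m =>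
    setIntegral_nonneg measurableSet_Ioi (hF_nonneg m)
  have hpartial : ∀ N, ∑ m ∈ Finset.range N, ∫ u in Ioi 1, F m u ≤ 2 / (s + 1) := fun N =>
    (Finset.sum_le_sum fun m _ => integral_exp_mul_pow_div_factorial_le s m).trans
      (sum_range_two_div_le s N)
  have hsummable : Summable fun m => ∫ u in Ioi 1, ‖F m u‖ := by
    refine (summable_of_sum_range_le hterm_nonneg hpartial).congr fun m => ?_
    exact setIntegral_congr_fun measurableSet_Ioi fun u hu =>
      (norm_of_nonneg (hF_nonneg m u hu)).symm
  calc ∫ u in Ioi (1:ℝ), discHeat u k / u^2 = ∫ u in Ioi 1, ∑' m, F m u :=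
        setIntegral_congr_fun measurableSet_Ioi fun u (hu : 1 < u) =>
          discHeat_div_sq_eq_tsum hk (by positivity)
    _ = ∑' m, ∫ u in Ioi 1, F m u := (integral_tsum_of_summable_integral_norm hF_int hsummable).symm
    _ ≤ 2 / (s + 1) := Real.tsum_le_of_sum_range_le hterm_nonneg hpartial

lemma integral_discHeat_div_sq_le (k : ℤ) :
    ∫ u in Ioi (1:ℝ), discHeat u k / u^2 ≤ 4 / √(1 + k.natAbs) := by
  rcases Nat.lt_or_ge k.natAbs 2 with hk | hk
  · refine (integral_discHeat_div_sq_le_one k).trans ?_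
    rw [le_div_iff₀ (by positivity), one_mul, sqrt_le_left (by norm_num)]
    have : (k.natAbs : ℝ) ≤ 1 := by exact_mod_cast Nat.le_of_lt_succ hk
    linarith
  · obtain ⟨s, hs⟩ := Nat.exists_eq_add_of_le' hk
    refine (integral_discHeat_div_sq_le_of_natAbs_eq hs).trans ?_
    have hsqrt : √(1 + (k.natAbs : ℝ)) ≤ s + 2 := by
      rw [sqrt_le_left (by positivity), hs]; push_cast; nlinarith
    rw [div_le_div_iff₀ (by positivity) (by positivity)]
    nlinarith

lemma abs_exp_neg_sub_one_le {x : ℝ} (hx : 0 ≤ x) : |exp (-x) - 1| ≤ x := by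
  rw [abs_of_nonpos (by simpa using hx)]
  linarith [add_one_le_exp (-x)]

lemma abs_integral_discHeat_mul_exp_sub_one_div_le (t : ℝ) (k : ℤ) :
    |∫ u in Ioi (1:ℝ), discHeat u k * (exp (-t^2/(4*u)) - 1) / u| ≤ t^2 / √(1 + k.natAbs) := by
  have hpointwise : ∀ u ∈ Ioi (1:ℝ),
      ‖discHeat u k * (exp (-t^2/(4*u)) - 1) / u‖ ≤ t^2/4 * (discHeat u k / u^2) := by
    intro u (hu : 1 < u)
    have hu0 : 0 < u := by linarith
    have hexp : |exp (-t^2/(4*u)) - 1| ≤ t^2/(4*u) := by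
      rw [neg_div]; exact abs_exp_neg_sub_one_le (by positivity)
    rw [norm_eq_abs, abs_div, abs_mul, abs_of_nonneg (discHeat_nonneg hu0.le k), abs_of_pos hu0]
    calc discHeat u k * |exp (-t^2/(4*u)) - 1| / u ≤ discHeat u k * (t^2/(4*u)) / u := by
          gcongr; exact discHeat_nonneg hu0.le k
      _ = t^2/4 * (discHeat u k / u^2) := by field_simp
  calc |∫ u in Ioi (1:ℝ), discHeat u k * (exp (-t^2/(4*u)) - 1) / u|
      ≤ ∫ u in Ioi (1:ℝ), t^2/4 * (discHeat u k / u^2) :=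
        norm_integral_le_of_norm_le ((integrableOn_discHeat_div_sq k).const_mul _)
          (ae_restrict_of_forall_mem measurableSet_Ioi hpointwise)
    _ = t^2/4 * ∫ u in Ioi (1:ℝ), discHeat u k / u^2 := integral_const_mul _ _
    _ ≤ t^2/4 * (4 / √(1 + k.natAbs)) := by gcongr; exact integral_discHeat_div_sq_le k
    _ = t^2 / √(1 + k.natAbs) := by ring

lemma sqrt_one_add_natAbs_le_mul (n m : ℤ) :
    √(1 + m.natAbs) ≤ √(1 + n.natAbs) * √(1 + (n - m).natAbs) := by
  have htri : (m.natAbs : ℝ) ≤ n.natAbs + (n - m).natAbs := by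
    have := Int.natAbs_sub_le n (n - m)
    rw [sub_sub_cancel] at this
    exact_mod_cast this
  rw [← sqrt_mul (by positivity)]
  gcongr
  nlinarith [n.natAbs.cast_nonneg (α := ℝ)]

lemma abs_integral_discHeat_sub_le (t : ℝ) (n m : ℤ) :
    |∫ u in Ioi (1:ℝ), discHeat u (n - m) * (exp (-t^2/(4*u)) - 1) / u|
      ≤ t^2 * √(1 + n.natAbs) / √(1 + m.natAbs) := by
  refine (abs_integral_discHeat_mul_exp_sub_one_div_le t (n - m)).trans ?_
  rw [div_le_div_iff₀ (by positivity) (by positivity), mul_assoc]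
  gcongr
  exact sqrt_one_add_natAbs_le_mul n m

theorem stmt12 (f : ℤ → ℝ)
    (hf : Summable fun m : ℤ => |f m| / Real.sqrt (1 + (m.natAbs : ℝ))) (n : ℤ) :
    ∃ C > 0, (∀ t ∈ Ioo (0:ℝ) 1,
      |∑' m : ℤ, f m * ∫ u in Ioi (1:ℝ), discHeat u (n - m) * (Real.exp (-t^2/(4*u)) - 1) / u|
        ≤ C * t^2 * Real.sqrt (1 + (n.natAbs : ℝ)) *
            ∑' m : ℤ, |f m| / Real.sqrt (1 + (m.natAbs : ℝ))) ∧
    Filter.Tendsto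
      (fun t : ℝ =>
        ∑' m : ℤ, f m * ∫ u in Ioi (1:ℝ), discHeat u (n - m) * (Real.exp (-t^2/(4*u)) - 1) / u)
      (nhdsWithin 0 (Ioi 0)) (nhds 0) := by
  have hbound : ∀ t : ℝ,
      ‖∑' m : ℤ, f m * ∫ u in Ioi (1:ℝ), discHeat u (n - m) * (exp (-t^2/(4*u)) - 1) / u‖
        ≤ t^2 * √(1 + n.natAbs) * ∑' m : ℤ, |f m| / √(1 + m.natAbs) := fun t =>
    tsum_of_norm_bounded (hf.hasSum.mul_left _) fun m => by
      rw [norm_mul, norm_eq_abs, norm_eq_abs, mul_div_assoc', mul_comm _ |f m|, mul_div_assoc]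
      gcongr
      exact abs_integral_discHeat_sub_le t n m
  refine ⟨1, one_pos, fun t _ => by simpa only [one_mul, norm_eq_abs] using hbound t,
    squeeze_zero_norm hbound ?_⟩
  have hcont : Continuous fun t : ℝ =>
      t^2 * √(1 + n.natAbs) * ∑' m : ℤ, |f m| / √(1 + m.natAbs) := by
    fun_prop
  simpa using (hcont.tendsto 0).mono_left nhdsWithin_le_nhds
end

section
/- Let d ≥ 1, t > 0, x ∈ ℝ^d, and let T_u(z) = (4πu)^{-d/2} e^{-|z|²/(4u)} be the Gaussian heat kernel. Suppose 0 ≤ T_u^V(x,y) ≤ T_u(x-y) for all y, u, and f ∈ L¹₀(ℝ^d). Then | ∫_{ℝ^d \ B(x,1)} f(y) ∫₀^∞ T_u^V(x,y) (e^{-t²/(4u)} - 1)/u du dy | ≤ C t² (1+|x|)^d ∫_{ℝ^d} |f(y)| (1+|y|)^{-d} dy for t ∈ (0,1). -/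
/-!
On `‖x - y‖ ≥ 1` the bound `|e^{-s} - 1| ≤ s` dominates the time integral by
`t²/4 · ∫₀^∞ T_u(x - y) u⁻² du`, which the substitution `u ↦ u⁻¹` turns into a Gamma integral equal
to `4 π^{-d/2} Γ(d/2 + 1) ‖x - y‖^{-(d+2)}`. Since `‖x - y‖ ≥ 1` this is at most a multiple of
`‖x - y‖^{-d} ≤ 2^d (1 + ‖x‖)^d (1 + ‖y‖)^{-d}`, and integrating against `|f|` gives the claim.
-/

open MeasureTheory Real Set

lemma abs_exp_neg_sub_one_le_s15 {s : ℝ} (hs : 0 ≤ s) : |exp (-s) - 1| ≤ s := by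
  rw [abs_sub_comm, abs_of_nonneg (by simpa using hs)]
  linarith [one_sub_le_exp_neg s]

-- The integrand of `integral_comp_rpow_Ioi` with `p = -1`.
lemma rpow_neg_sub_one_mul_exp_neg_div {a r u : ℝ} (hu : 0 < u) :
    u ^ ((-1 : ℝ) - 1) • ((u ^ (-1 : ℝ)) ^ (a - 1) * exp (-(r * u ^ (-1 : ℝ))))
      = u ^ (-a - 1) * exp (-(r / u)) := by
  rw [smul_eq_mul, ← rpow_mul hu.le, ← mul_assoc, ← rpow_add hu, rpow_neg_one, div_eq_mul_inv]
  ring_nf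

lemma integrableOn_rpow_neg_mul_exp_neg_div_Ioi {a r : ℝ} (ha : 0 < a) (hr : 0 < r) :
    IntegrableOn (fun u : ℝ ↦ u ^ (-a - 1) * exp (-(r / u))) (Ioi 0) := by
  have hg : IntegrableOn (fun v : ℝ ↦ v ^ (a - 1) * exp (-(r * v))) (Ioi 0) := by
    simpa using integrableOn_rpow_mul_exp_neg_mul_rpow (p := 1) (by linarith) one_pos hr
  exact ((integrableOn_Ioi_comp_rpow_iff' _ (p := -1) (by norm_num)).mpr hg).congr_fun
    (fun u hu ↦ rpow_neg_sub_one_mul_exp_neg_div hu) measurableSet_Ioi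

lemma integral_rpow_neg_mul_exp_neg_div_Ioi {a r : ℝ} (ha : 0 < a) (hr : 0 < r) :
    ∫ u in Ioi 0, u ^ (-a - 1) * exp (-(r / u)) = (1 / r) ^ a * Gamma a := by
  rw [← integral_rpow_mul_exp_neg_mul_Ioi ha hr,
    ← integral_comp_rpow_Ioi (fun v ↦ v ^ (a - 1) * exp (-(r * v))) (p := -1) (by norm_num)]
  refine setIntegral_congr_fun measurableSet_Ioi (fun u hu ↦ ?_)
  rw [abs_neg, abs_one, one_mul, rpow_neg_sub_one_mul_exp_neg_div hu]

noncomputable def heatKernel (d : ℕ) (u r : ℝ) : ℝ :=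
  (4 * π * u) ^ (-(d : ℝ) / 2) * exp (-r ^ 2 / (4 * u))

lemma heatKernel_nonneg (d : ℕ) {u : ℝ} (hu : 0 ≤ u) (r : ℝ) : 0 ≤ heatKernel d u r := by
  unfold heatKernel; positivity

lemma heatKernel_div_sq (d : ℕ) {u : ℝ} (hu : 0 < u) (r : ℝ) :
    heatKernel d u r / u ^ 2
      = (4 * π) ^ (-(d : ℝ) / 2) * (u ^ (-((d : ℝ) / 2 + 1) - 1) * exp (-(r ^ 2 / 4 / u))) := by
  have hpow : u ^ (-((d : ℝ) / 2 + 1) - 1) = u ^ (-(d : ℝ) / 2) / u ^ 2 := by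
    rw [show -((d : ℝ) / 2 + 1) - 1 = -(d : ℝ) / 2 - (2 : ℕ) by push_cast; ring,
      rpow_sub_natCast hu.ne']
  rw [heatKernel, mul_rpow (by positivity) hu.le, hpow]
  field_simp

lemma integrableOn_heatKernel_div_sq (d : ℕ) {r : ℝ} (hr : r ≠ 0) :
    IntegrableOn (fun u ↦ heatKernel d u r / u ^ 2) (Ioi 0) := by
  have hc : 0 < r ^ 2 / 4 := by positivity
  refine IntegrableOn.congr_fun
    ((integrableOn_rpow_neg_mul_exp_neg_div_Ioi (by positivity) hc).const_mul
      ((4 * π) ^ (-(d : ℝ) / 2))) (fun u hu ↦ (heatKernel_div_sq d hu r).symm) measurableSet_Ioi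

lemma integral_heatKernel_div_sq (d : ℕ) {r : ℝ} (hr : 0 < r) :
    ∫ u in Ioi 0, heatKernel d u r / u ^ 2
      = 4 * π ^ (-(d : ℝ) / 2) * Gamma ((d : ℝ) / 2 + 1) * r ^ (-((d : ℝ) + 2)) := by
  rw [setIntegral_congr_fun measurableSet_Ioi (fun u hu ↦ heatKernel_div_sq d hu r),
    integral_const_mul, integral_rpow_neg_mul_exp_neg_div_Ioi (by positivity) (by positivity)]
  have hr2 : (r ^ 2) ^ ((d : ℝ) / 2 + 1) = r ^ ((d : ℝ) + 2) := by
    rw [← rpow_natCast, ← rpow_mul hr.le]; push_cast; ring_nf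
  rw [mul_rpow (by norm_num) pi_pos.le, one_div_div, div_rpow (by norm_num) (by positivity), hr2,
    rpow_neg hr.le, neg_div, rpow_neg (by norm_num), rpow_neg pi_pos.le, rpow_add (by norm_num),
    rpow_one]
  field_simp

lemma abs_integral_mul_exp_sub_one_div_le {d : ℕ} {K : ℝ → ℝ} {r : ℝ} (hr : 0 < r)
    (hK : ∀ u, 0 < u → 0 ≤ K u ∧ K u ≤ heatKernel d u r) (t : ℝ) :
    |∫ u in Ioi 0, K u * (exp (-t ^ 2 / (4 * u)) - 1) / u|
      ≤ π ^ (-(d : ℝ) / 2) * Gamma ((d : ℝ) / 2 + 1) * t ^ 2 * r ^ (-((d : ℝ) + 2)) := by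
  have hbound : ∀ u ∈ Ioi (0 : ℝ),
      ‖K u * (exp (-t ^ 2 / (4 * u)) - 1) / u‖ ≤ t ^ 2 / 4 * (heatKernel d u r / u ^ 2) := by
    intro u (hu : 0 < u)
    obtain ⟨hK0, hK1⟩ := hK u hu
    have hexp : |exp (-t ^ 2 / (4 * u)) - 1| ≤ t ^ 2 / (4 * u) := by
      rw [neg_div]; exact abs_exp_neg_sub_one_le_s15 (by positivity)
    calc ‖K u * (exp (-t ^ 2 / (4 * u)) - 1) / u‖
        = K u * |exp (-t ^ 2 / (4 * u)) - 1| / u := by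
          rw [norm_div, norm_mul, Real.norm_of_nonneg hK0, Real.norm_of_nonneg hu.le,
            Real.norm_eq_abs]
      _ ≤ heatKernel d u r * (t ^ 2 / (4 * u)) / u := by
          gcongr; exact heatKernel_nonneg d hu.le r
      _ = t ^ 2 / 4 * (heatKernel d u r / u ^ 2) := by field_simp
  calc |∫ u in Ioi 0, K u * (exp (-t ^ 2 / (4 * u)) - 1) / u|
      ≤ ∫ u in Ioi 0, t ^ 2 / 4 * (heatKernel d u r / u ^ 2) :=
        norm_integral_le_of_norm_le ((integrableOn_heatKernel_div_sq d hr.ne').const_mul _)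
          ((ae_restrict_iff' measurableSet_Ioi).mpr (.of_forall hbound))
    _ = _ := by rw [integral_const_mul, integral_heatKernel_div_sq d hr]; ring

lemma rpow_neg_norm_sub_le {E : Type*} [SeminormedAddCommGroup E] (d : ℕ) {x y : E}
    (hxy : 1 ≤ ‖x - y‖) :
    ‖x - y‖ ^ (-(d : ℝ)) ≤ 2 ^ d * (1 + ‖x‖) ^ d * (1 + ‖y‖) ^ (-(d : ℝ)) := by
  have hy : 1 + ‖y‖ ≤ 2 * (1 + ‖x‖) * ‖x - y‖ := by
    have := norm_le_norm_add_norm_sub' y x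
    rw [norm_sub_rev] at this
    nlinarith [norm_nonneg x]
  rw [rpow_neg_natCast, rpow_neg_natCast, zpow_neg, zpow_neg, zpow_natCast, zpow_natCast,
    ← mul_pow, ← div_eq_mul_inv, ← inv_pow, ← div_pow]
  gcongr
  rw [inv_le_comm₀ (by linarith) (by positivity), inv_div, div_le_iff₀ (by positivity)]
  linarith

lemma abs_setIntegral_mul_le {α : Type*} [MeasurableSpace α] {μ : Measure α} {s : Set α}
    (hs : MeasurableSet s) {f F w : α → ℝ} {c : ℝ} (hc : 0 ≤ c) (hw : 0 ≤ w)
    (hfw : Integrable (fun y ↦ |f y| * w y) μ) (hF : ∀ y ∈ s, |F y| ≤ c * w y) :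
    |∫ y in s, f y * F y ∂μ| ≤ c * ∫ y, |f y| * w y ∂μ := by
  have hbound : ∀ y ∈ s, ‖f y * F y‖ ≤ c * (|f y| * w y) := by
    intro y hy
    rw [norm_mul, Real.norm_eq_abs, Real.norm_eq_abs, mul_left_comm]
    exact mul_le_mul_of_nonneg_left (hF y hy) (abs_nonneg _)
  calc |∫ y in s, f y * F y ∂μ|
      ≤ ∫ y in s, c * (|f y| * w y) ∂μ :=
        norm_integral_le_of_norm_le (hfw.const_mul c).restrict
          ((ae_restrict_iff' hs).mpr (.of_forall hbound))
    _ ≤ ∫ y, c * (|f y| * w y) ∂μ :=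
        setIntegral_le_integral (hfw.const_mul c) (.of_forall fun y ↦
          mul_nonneg hc (mul_nonneg (abs_nonneg _) (hw y)))
    _ = c * ∫ y, |f y| * w y ∂μ := integral_const_mul c _

theorem stmt15_general (d : ℕ) :
    ∃ C > 0, ∀ (TV : ℝ → EuclideanSpace ℝ (Fin d) → EuclideanSpace ℝ (Fin d) → ℝ)
      (f : EuclideanSpace ℝ (Fin d) → ℝ) (x : EuclideanSpace ℝ (Fin d)) (t : ℝ),
      (∀ u y, 0 < u → 0 ≤ TV u x y ∧
        TV u x y ≤ (4 * Real.pi * u) ^ (-(d:ℝ)/2) * Real.exp (-‖x - y‖^2/(4*u))) →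
      Integrable (fun y => |f y| * (1 + ‖y‖) ^ (-(d:ℝ))) →
      t ∈ Ioo (0:ℝ) 1 →
      |∫ y in (Metric.ball x 1)ᶜ,
          f y * ∫ u in Ioi (0:ℝ), TV u x y * (Real.exp (-t^2/(4*u)) - 1) / u|
        ≤ C * t^2 * (1 + ‖x‖)^d * ∫ y, |f y| * (1 + ‖y‖) ^ (-(d:ℝ)) := by
  set c₀ := π ^ (-(d : ℝ) / 2) * Gamma ((d : ℝ) / 2 + 1)
  refine ⟨c₀ * 2 ^ d, by positivity, fun TV f x t hTV hf _ ↦ ?_⟩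
  refine abs_setIntegral_mul_le measurableSet_ball.compl (by positivity)
    (fun y ↦ by positivity) hf (fun y hy ↦ ?_)
  have hxy : 1 ≤ ‖x - y‖ := by simpa [dist_eq_norm'] using hy
  calc |∫ u in Ioi 0, TV u x y * (exp (-t ^ 2 / (4 * u)) - 1) / u|
      ≤ c₀ * t ^ 2 * ‖x - y‖ ^ (-((d : ℝ) + 2)) :=
        abs_integral_mul_exp_sub_one_div_le (K := (TV · x y)) (by linarith)
          (fun u hu ↦ hTV u y hu) t
    _ ≤ c₀ * t ^ 2 * ‖x - y‖ ^ (-(d : ℝ)) := by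
        gcongr; linarith
    _ ≤ c₀ * t ^ 2 * (2 ^ d * (1 + ‖x‖) ^ d * (1 + ‖y‖) ^ (-(d : ℝ))) := by
        gcongr; exact rpow_neg_norm_sub_le d hxy
    _ = c₀ * 2 ^ d * t ^ 2 * (1 + ‖x‖) ^ d * (1 + ‖y‖) ^ (-(d : ℝ)) := by ring

theorem stmt15 (d : ℕ) (hd : 1 ≤ d) :
    ∃ C > 0, ∀ (TV : ℝ → EuclideanSpace ℝ (Fin d) → EuclideanSpace ℝ (Fin d) → ℝ)
      (f : EuclideanSpace ℝ (Fin d) → ℝ) (x : EuclideanSpace ℝ (Fin d)) (t : ℝ),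
      (∀ u y, 0 < u → 0 ≤ TV u x y ∧
        TV u x y ≤ (4 * Real.pi * u) ^ (-(d:ℝ)/2) * Real.exp (-‖x - y‖^2/(4*u))) →
      Integrable (fun y => |f y| * (1 + ‖y‖) ^ (-(d:ℝ))) →
      t ∈ Ioo (0:ℝ) 1 →
      |∫ y in (Metric.ball x 1)ᶜ,
          f y * ∫ u in Ioi (0:ℝ), TV u x y * (Real.exp (-t^2/(4*u)) - 1) / u|
        ≤ C * t^2 * (1 + ‖x‖)^d * ∫ y, |f y| * (1 + ‖y‖) ^ (-(d:ℝ)) :=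
  stmt15_general d
end

section
/- Let δ > 0 and d ≥ 1. Then ∫₀¹ ∫₀^{ρ²} u^{δ/2 - 1} r^{d-1} / (√u + r)^d du dr ≤ C ρ^{δ/2}, for every ρ > 0 with ρ ≤ 1, where C depends only on d and δ. -/
open MeasureTheory Real Set

/-!
Since `r ≤ √u + r`, the integrand is at most `u ^ (δ/2 - 1) / (√u + r)`, and weighted AM-GM
`√u ^ θ * r ^ (1 - θ) ≤ √u + r` turns this into the product `u ^ (δ/2 - θ/2 - 1) * r ^ (θ - 1)`,
which separates the variables. Both factors are integrable once `0 < θ < δ`, giving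
`ρ ^ (δ - θ) / ((δ/2 - θ/2) θ)`, and `ρ ^ (δ - θ) ≤ ρ ^ (δ/2)` for `ρ ≤ 1` as soon as `θ ≤ δ/2`;
so `θ = min (δ/2) 1` works (AM-GM needs `θ ≤ 1`).
-/

theorem integral_Ioo_rpow {p c : ℝ} (hp : -1 < p) (hc : 0 ≤ c) :
    ∫ x in Ioo 0 c, x ^ p = c ^ (p + 1) / (p + 1) := by
  rw [← integral_Ioc_eq_integral_Ioo, ← intervalIntegral.integral_of_le hc,
    integral_rpow (Or.inl hp), zero_rpow (by linarith), sub_zero]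

theorem integral_Ioo_integral_Ioo_le_of_le_rpow_mul_rpow {f : ℝ → ℝ → ℝ} {a b p q : ℝ}
    (ha : 0 < a) (hb : 0 < b) (hp : -1 < p) (hq : -1 < q)
    (hf₀ : ∀ r ∈ Ioo 0 a, ∀ u ∈ Ioo 0 b, 0 ≤ f r u)
    (hf : ∀ r ∈ Ioo 0 a, ∀ u ∈ Ioo 0 b, f r u ≤ u ^ p * r ^ q) :
    ∫ r in Ioo 0 a, ∫ u in Ioo 0 b, f r u ≤ b ^ (p + 1) / (p + 1) * (a ^ (q + 1) / (q + 1)) := by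
  have hinner : ∀ r ∈ Ioo 0 a, ∫ u in Ioo 0 b, f r u ≤ b ^ (p + 1) / (p + 1) * r ^ q := by
    intro r hr
    calc ∫ u in Ioo 0 b, f r u ≤ ∫ u in Ioo 0 b, u ^ p * r ^ q :=
          integral_mono_of_nonneg (ae_restrict_of_forall_mem measurableSet_Ioo (hf₀ r hr))
            (((intervalIntegral.integrableOn_Ioo_rpow_iff hb).2 hp).mul_const _)
            (ae_restrict_of_forall_mem measurableSet_Ioo (hf r hr))
      _ = b ^ (p + 1) / (p + 1) * r ^ q := by
          rw [integral_mul_const, integral_Ioo_rpow hp hb.le]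
  calc ∫ r in Ioo 0 a, ∫ u in Ioo 0 b, f r u
      ≤ ∫ r in Ioo 0 a, b ^ (p + 1) / (p + 1) * r ^ q :=
        integral_mono_of_nonneg
          (ae_restrict_of_forall_mem measurableSet_Ioo fun r hr ↦
            setIntegral_nonneg measurableSet_Ioo (hf₀ r hr))
          (((intervalIntegral.integrableOn_Ioo_rpow_iff ha).2 hq).const_mul _)
          (ae_restrict_of_forall_mem measurableSet_Ioo hinner)
    _ = b ^ (p + 1) / (p + 1) * (a ^ (q + 1) / (q + 1)) := by
        rw [integral_const_mul, integral_Ioo_rpow hq ha.le]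

theorem pow_pred_div_pow_le_inv {r t : ℝ} {d : ℕ} (hd : 1 ≤ d) (hr : 0 ≤ r) (hrt : r ≤ t) :
    r ^ (d - 1) / t ^ d ≤ t⁻¹ := by
  have ht : 0 ≤ t := hr.trans hrt
  obtain ⟨k, rfl⟩ : ∃ k, d = k + 1 := ⟨d - 1, by omega⟩
  rw [Nat.add_sub_cancel, pow_succ, ← div_div, ← div_pow]
  exact mul_le_of_le_one_left (inv_nonneg.2 ht)
    (pow_le_one₀ (div_nonneg hr ht) (div_le_one_of_le₀ hrt ht))

theorem inv_add_le_rpow_neg_mul_rpow {s r θ : ℝ} (hs : 0 < s) (hr : 0 < r) (hθ₀ : 0 ≤ θ)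
    (hθ₁ : θ ≤ 1) : (s + r)⁻¹ ≤ s ^ (-θ) * r ^ (θ - 1) := by
  have hamgm : s ^ θ * r ^ (1 - θ) ≤ s + r := by
    have := geom_mean_le_arith_mean2_weighted hθ₀ (sub_nonneg.2 hθ₁) hs.le hr.le
      (add_sub_cancel θ 1)
    nlinarith [mul_le_mul_of_nonneg_right hθ₁ hs.le]
  calc (s + r)⁻¹ ≤ (s ^ θ * r ^ (1 - θ))⁻¹ := inv_anti₀ (by positivity) hamgm
    _ = s ^ (-θ) * r ^ (θ - 1) := by
        rw [mul_inv, ← rpow_neg hs.le, ← rpow_neg hr.le, neg_sub]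

theorem rpow_mul_pow_pred_div_sqrt_add_pow_le {u r α θ : ℝ} {d : ℕ} (hd : 1 ≤ d) (hu : 0 < u)
    (hr : 0 < r) (hθ₀ : 0 ≤ θ) (hθ₁ : θ ≤ 1) :
    u ^ (α - 1) * r ^ (d - 1) / (√u + r) ^ d ≤ u ^ (α - θ / 2 - 1) * r ^ (θ - 1) := by
  have hsqrt : √u ^ (-θ) = u ^ (-(θ / 2)) := by
    rw [sqrt_eq_rpow, ← rpow_mul hu.le]; ring_nf
  have hsu := sqrt_pos.2 hu
  calc u ^ (α - 1) * r ^ (d - 1) / (√u + r) ^ d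
      = u ^ (α - 1) * (r ^ (d - 1) / (√u + r) ^ d) := mul_div_assoc _ _ _
    _ ≤ u ^ (α - 1) * (√u ^ (-θ) * r ^ (θ - 1)) := by
        gcongr
        exact (pow_pred_div_pow_le_inv hd hr.le (by linarith)).trans
          (inv_add_le_rpow_neg_mul_rpow hsu hr hθ₀ hθ₁)
    _ = u ^ (α - θ / 2 - 1) * r ^ (θ - 1) := by
        rw [hsqrt, ← mul_assoc, ← rpow_add hu]; ring_nf

theorem stmt16 (d : ℕ) (hd : 1 ≤ d) (δ : ℝ) (hδ : 0 < δ) :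
    ∃ C > 0, ∀ ρ : ℝ, 0 < ρ → ρ ≤ 1 →
      ∫ r in Ioo (0:ℝ) 1, ∫ u in Ioo (0:ℝ) (ρ^2),
          u ^ (δ/2 - 1) * r ^ (d-1) / (Real.sqrt u + r) ^ d
        ≤ C * ρ ^ (δ/2) := by
  set α := δ / 2
  set θ := min α 1
  have hθ₀ : 0 < θ := lt_min (by positivity) one_pos
  have hθα : θ ≤ α := min_le_left _ _
  have hexp : 0 < α - θ / 2 := by linarith
  refine ⟨1 / ((α - θ / 2) * θ), by positivity, fun ρ hρ₀ hρ₁ ↦ ?_⟩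
  have hρ : (ρ ^ 2) ^ (α - θ / 2) ≤ ρ ^ α := by
    rw [← rpow_natCast, ← rpow_mul hρ₀.le]
    exact rpow_le_rpow_of_exponent_ge hρ₀ hρ₁ (by push_cast; linarith)
  calc _ ≤ (ρ ^ 2) ^ (α - θ / 2 - 1 + 1) / (α - θ / 2 - 1 + 1)
          * (1 ^ (θ - 1 + 1) / (θ - 1 + 1)) :=
        integral_Ioo_integral_Ioo_le_of_le_rpow_mul_rpow one_pos (by positivity)
          (by linarith) (by linarith)
          (fun r hr u hu ↦ by have := hr.1; have := hu.1; positivity)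
          (fun r hr u hu ↦ rpow_mul_pow_pred_div_sqrt_add_pow_le hd hu.1 hr.1 hθ₀.le
            (min_le_right _ _))
    _ = 1 / ((α - θ / 2) * θ) * (ρ ^ 2) ^ (α - θ / 2) := by
        simp only [sub_add_cancel, one_rpow]; field_simp
    _ ≤ 1 / ((α - θ / 2) * θ) * ρ ^ α := by gcongr
end
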